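/- In the reduction from ranking-based elections to approval elections, if the underlying multi-winner approval rule R is strongly GSP and Pareto-efficient, then the induced single-winner ranking-based rule T (defined by T(≻) = the unique alternative in R(P(≻)) \ D) is onto: for every alternative a ∈ A there exists a ranking profile ≻ with T(≻) = a. -/

import Mathlib

/-- Hamming distance between finite sets. -/
def hd {A : Type*} [DecidableEq A] (Q T : Finset A) : ℕ :=
  (Q \ T).card + (T \ Q).card

/-- A rule is unanimous if whenever all agents report the same size-`k` set `S`,
the output is `S`. -/
def Unanimous {A ι : Type*} [DecidableEq A] (k : ℕ)
    (R : (ι → Finset A) → Finset A) : Prop :=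
  ∀ S : Finset A, S.card = k → R (fun _ => S) = S

/-- Strong group-strategyproofness: no coalition can misreport so that, measured
from the true ballots, no member is worse off and some member is strictly better off. -/
def StronglyGSP {A ι : Type*} [DecidableEq A] [DecidableEq ι]
    (R : (ι → Finset A) → Finset A) : Prop :=
  ∀ (P P' : ι → Finset A) (S : Finset ι),
    (∀ i, i ∉ S → P' i = P i) →
    ¬ ((∀ i ∈ S, hd (P i) (R P') ≤ hd (P i) (R P)) ∧
       (∃ i ∈ S, hd (P i) (R P') < hd (P i) (R P)))

/-- Pareto-efficiency: no size-`k` committee weakly improves every agent and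
strictly improves some agent, compared to the rule's outcome. -/
def ParetoEfficient {A ι : Type*} [DecidableEq A] (k : ℕ)
    (R : (ι → Finset A) → Finset A) : Prop :=
  ∀ P : ι → Finset A,
    ¬ ∃ K' : Finset A, K'.card = k ∧
      (∀ i, hd (P i) K' ≤ hd (P i) (R P)) ∧
      (∃ i, hd (P i) K' < hd (P i) (R P))

/-- The set of `k-1` dummy alternatives inside `Fin m ⊕ Fin (k-1)`. -/
def dummies (m k : ℕ) : Finset (Fin m ⊕ Fin (k - 1)) :=
  Finset.univ.image Sum.inr

/-- The approval profile constructed from a ranking profile `σ`, where `σ i t`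
is the alternative ranked at position `t` by agent `i` (position `0` is the top).
Agent `(i, j)` (for `j : Fin (m-1)`, representing the index `j+1 ∈ [m-1]`)
approves the top `j+1` alternatives of `σ i` together with all dummies. -/
def redProfile {n m k : ℕ} (σ : Fin n → Equiv.Perm (Fin m)) :
    (Fin n × Fin (m - 1)) → Finset (Fin m ⊕ Fin (k - 1)) :=
  fun p =>
    ((Finset.univ.filter (fun t : Fin m => t.val ≤ p.2.val)).image
        (fun t => Sum.inl (σ p.1 t))) ∪ dummies m k

/-!
Let every voter rank `a` first. Then every approval ballot contains the committee
`K = {a} ∪ D` of size `k`, and the ballot of each agent `(i, 1)` is exactly `K`. A ballot `B ⊇ K`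
is at distance `|B| - k` from `K`, the least possible distance from `B` to any size-`k`
committee, so `K` weakly improves on every outcome for every agent and strictly for `(i, 1)`
unless the outcome is `K`. Pareto-efficiency therefore forces `R = K`, whose only
non-dummy member is `a`.
-/

section HammingDistance

variable {A : Type*} [DecidableEq A]

lemma hd_eq_zero_iff {Q T : Finset A} : hd Q T = 0 ↔ Q = T := by
  simp only [hd, Nat.add_eq_zero_iff, Finset.card_eq_zero, Finset.sdiff_eq_empty_iff_subset]
  exact ⟨fun h => h.1.antisymm h.2, fun h => ⟨h.le, h.ge⟩⟩

lemma card_sub_card_le_hd (Q T : Finset A) : Q.card - T.card ≤ hd Q T := by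
  have := Finset.le_card_sdiff T Q
  unfold hd
  omega

lemma hd_of_subset {Q T : Finset A} (h : T ⊆ Q) : hd Q T = Q.card - T.card := by
  rw [hd, Finset.sdiff_eq_empty_iff_subset.2 h, Finset.card_empty, Finset.card_sdiff_of_subset h,
    add_zero]

end HammingDistance

lemma ParetoEfficient.eq_of_forall_subset {A ι : Type*} [DecidableEq A] {k : ℕ}
    {R : (ι → Finset A) → Finset A} (hPE : ParetoEfficient k R) {P : ι → Finset A}
    (hcard : (R P).card = k) {K : Finset A} (hK : K.card = k) (hsub : ∀ i, K ⊆ P i)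
    {i₀ : ι} (hi₀ : P i₀ = K) : R P = K := by
  by_contra hne
  refine hPE P ⟨K, hK, fun i => ?_, i₀, ?_⟩
  · rw [hd_of_subset (hsub i), hK, ← hcard]
    exact card_sub_card_le_hd _ _
  · rw [hi₀, hd_eq_zero_iff.2 rfl, Nat.pos_iff_ne_zero, Ne, hd_eq_zero_iff]
    exact Ne.symm hne

section Reduction

variable {n m k : ℕ} {σ : Fin n → Equiv.Perm (Fin m)}

lemma inl_notMem_dummies (a : Fin m) : Sum.inl a ∉ dummies m k := by
  simp [dummies]

lemma card_dummies : (dummies m k).card = k - 1 := by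
  rw [dummies, Finset.card_image_of_injective _ Sum.inr_injective, Finset.card_univ,
    Fintype.card_fin]

lemma dummies_subset_redProfile (p : Fin n × Fin (m - 1)) : dummies m k ⊆ redProfile σ p :=
  Finset.subset_union_right

lemma inl_mem_redProfile_iff {p : Fin n × Fin (m - 1)} {x : Fin m} :
    Sum.inl x ∈ redProfile (k := k) σ p ↔ ((σ p.1).symm x).val ≤ p.2.val := by
  simp [redProfile, dummies, ← Equiv.eq_symm_apply]

lemma insert_dummies_subset_redProfile {a : Fin m} (htop : ∀ i, ((σ i).symm a).val = 0)
    (p : Fin n × Fin (m - 1)) : insert (Sum.inl a) (dummies m k) ⊆ redProfile σ p :=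
  Finset.insert_subset (inl_mem_redProfile_iff.2 (htop p.1 ▸ Nat.zero_le _))
    (dummies_subset_redProfile p)

lemma redProfile_eq_insert_dummies {a : Fin m} (htop : ∀ i, ((σ i).symm a).val = 0)
    {p : Fin n × Fin (m - 1)} (hp : p.2.val = 0) :
    redProfile σ p = insert (Sum.inl a) (dummies m k) := by
  ext (x | d)
  · rw [inl_mem_redProfile_iff, hp, Nat.le_zero, Finset.mem_insert,
      or_iff_left (inl_notMem_dummies x), Sum.inl.injEq, ← htop p.1, Fin.val_inj,
      (σ p.1).symm.injective.eq_iff]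
  · simp [redProfile, dummies]

end Reduction

theorem induced_rule_onto_general {n m k : ℕ} (hn : 1 ≤ n) (hm : 2 ≤ m) (hk : 1 ≤ k)
    (R : ((Fin n × Fin (m - 1)) → Finset (Fin m ⊕ Fin (k - 1))) → Finset (Fin m ⊕ Fin (k - 1)))
    (hcard : ∀ P, (R P).card = k)
    (hPE : ParetoEfficient k R) :
    ∀ a : Fin m, ∃ σ : Fin n → Equiv.Perm (Fin m),
      R (redProfile σ) \ dummies m k = {Sum.inl a} := by
  intro a
  let top : Fin m := ⟨0, by omega⟩
  have htop : ∀ _ : Fin n, ((Equiv.swap top a).symm a).val = 0 := fun _ => by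
    rw [Equiv.symm_swap, Equiv.swap_apply_right]
  have hK : (insert (Sum.inl a) (dummies m k)).card = k := by
    rw [Finset.card_insert_of_notMem (inl_notMem_dummies a), card_dummies]
    omega
  have hR : R (redProfile fun _ => Equiv.swap top a) = insert (Sum.inl a) (dummies m k) :=
    hPE.eq_of_forall_subset (hcard _) hK (insert_dummies_subset_redProfile htop)
      (i₀ := (⟨0, hn⟩, ⟨0, by omega⟩)) (redProfile_eq_insert_dummies htop rfl)
  refine ⟨fun _ => Equiv.swap top a, ?_⟩
  rw [hR, Finset.insert_sdiff_of_notMem _ (inl_notMem_dummies a), Finset.sdiff_self,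
    insert_empty_eq]

/-- If `R` is strongly GSP and Pareto-efficient, the induced single-winner
ranking-based rule `T` (given by the unique real alternative in
`R (redProfile σ) \ D`) is onto: every alternative `a` is the output at some
ranking profile. -/
theorem induced_rule_onto {n m k : ℕ} (hn : 1 ≤ n) (hm : 2 ≤ m) (hk : 1 ≤ k)
    (R : ((Fin n × Fin (m - 1)) → Finset (Fin m ⊕ Fin (k - 1))) → Finset (Fin m ⊕ Fin (k - 1)))
    (hcard : ∀ P, (R P).card = k)
    (hGSP : StronglyGSP R) (hPE : ParetoEfficient k R) :
    ∀ a : Fin m, ∃ σ : Fin n → Equiv.Perm (Fin m),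
      R (redProfile σ) \ dummies m k = {Sum.inl a} :=
  induced_rule_onto_general hn hm hk R hcard hPE
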